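/- arXiv:0908.0995 — 2 statements merged into one kernel-verified Lean document; each statement's English description precedes it below -/
import Mathlib

section
/- Let Γ be a δ-hyperbolic geodesic space with δ > 0, a an isometry of Γ, and p ∈ Γ a point with d(p, a(p)) ≤ d(a(p), a^{-1}(p)) − 100δ. Then a is a hyperbolic isometry; in particular a has infinite order. -/
/-!
Write `(x|y)_w` for the Gromov product. Thin triangles give Gromov's four-point condition
`min ((x|z)_w, (z|y)_w) ≤ (x|y)_w + 3δ`. Along the orbit `xₙ = aⁿ p` consecutive points are at
distance `D = d(p, a p)` and, by the hypothesis, every turn `(xₙ|xₙ₊₂)_{xₙ₊₁}` is at most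
`D/2 - 50δ`. The four-point condition propagates this: `(x₀|xₙ₊₂)_{xₙ₊₁} ≤ D/2 - 47δ` for all `n`,
so each step of the orbit increases the distance to `x₀` by at least `94δ`.
-/

open Filter Metric Set

/-- A geodesic segment from `x` to `y`: the image of an isometric parametrization
of the interval `[0, dist x y]`. -/
def IsGeodesicSegment {X : Type*} [MetricSpace X] (s : Set X) (x y : X) : Prop :=
  ∃ γ : ℝ → X, γ 0 = x ∧ γ (dist x y) = y ∧
    (∀ u ∈ Set.Icc (0:ℝ) (dist x y), ∀ v ∈ Set.Icc (0:ℝ) (dist x y),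
      dist (γ u) (γ v) = |u - v|) ∧ s = γ '' Set.Icc (0:ℝ) (dist x y)

/-- A geodesic metric space: any two points are joined by a geodesic segment. -/
def GeodesicSpace (X : Type*) [MetricSpace X] : Prop :=
  ∀ x y : X, ∃ s : Set X, IsGeodesicSegment s x y

/-- `δ`-hyperbolicity via thin triangles: each side of a geodesic triangle is contained
in the `δ`-neighborhood of the union of the other two sides. -/
def DeltaHyperbolic (X : Type*) [MetricSpace X] (δ : ℝ) : Prop :=
  ∀ x y z : X, ∀ s t u : Set X, IsGeodesicSegment s x y → IsGeodesicSegment t y z →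
    IsGeodesicSegment u x z → ∀ p ∈ u, ∃ q ∈ s ∪ t, dist p q ≤ δ

/-- A bi-infinite geodesic line, parametrized by arclength. -/
def IsGeodesicLine {X : Type*} [MetricSpace X] (α : ℝ → X) : Prop :=
  ∀ s t : ℝ, dist (α s) (α t) = |s - t|

/-- The `10δ`-overlap `α ∩_{10δ} β = (α ∩ N_{10δ}(β)) ∪ (β ∩ N_{10δ}(α))`
of two geodesic lines. -/
def OverlapSet {X : Type*} [MetricSpace X] (δ : ℝ) (α β : ℝ → X) : Set X :=
  (Set.range α ∩ {x | ∃ t : ℝ, dist x (β t) ≤ 10 * δ}) ∪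
  (Set.range β ∩ {x | ∃ t : ℝ, dist x (α t) ≤ 10 * δ})

/-- Translation length of an isometry: `tr a = lim dist x (aⁿ x) / n` (for every basepoint). -/
def HasTransLengthIso {X : Type*} [MetricSpace X] (a : X ≃ᵢ X) (τ : ℝ) : Prop :=
  ∀ x : X, Filter.Tendsto (fun n : ℕ => dist x ((a ^ n) x) / (n : ℝ))
    Filter.atTop (nhds τ)

/-- An isometry is hyperbolic if some orbit moves at least linearly. -/
def IsHyperbolicIso {X : Type*} [MetricSpace X] (a : X ≃ᵢ X) : Prop :=
  ∃ (x : X) (C : ℝ), 0 < C ∧ ∀ n : ℕ, 0 < n → C * (n : ℝ) ≤ dist x ((a ^ n) x)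

/-- A (geodesic) quasi-axis of an isometry `a`: a geodesic line `α` with `a(α) ⊆ N_C(α)`
for some `C ≥ 0`. -/
def IsQuasiAxisIso {X : Type*} [MetricSpace X] (a : X ≃ᵢ X) (α : ℝ → X) : Prop :=
  IsGeodesicLine α ∧ ∃ C : ℝ, 0 ≤ C ∧ ∀ t : ℝ, ∃ s : ℝ, dist (a (α t)) (α s) ≤ C

section GeodesicSegment

variable {X : Type*} [MetricSpace X] {s : Set X} {x y : X}

namespace IsGeodesicSegment

theorem left_mem (h : IsGeodesicSegment s x y) : x ∈ s := by
  obtain ⟨γ, h0, -, -, rfl⟩ := h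
  exact ⟨0, left_mem_Icc.2 dist_nonneg, h0⟩

theorem right_mem (h : IsGeodesicSegment s x y) : y ∈ s := by
  obtain ⟨γ, -, hL, -, rfl⟩ := h
  exact ⟨dist x y, right_mem_Icc.2 dist_nonneg, hL⟩

theorem dist_add_dist_of_mem (h : IsGeodesicSegment s x y) {m : X} (hm : m ∈ s) :
    dist x m + dist m y = dist x y := by
  obtain ⟨γ, h0, hL, hiso, rfl⟩ := h
  obtain ⟨u, hu, rfl⟩ := hm
  have hx := hiso 0 (left_mem_Icc.2 dist_nonneg) u hu
  have hy := hiso u hu _ (right_mem_Icc.2 dist_nonneg)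
  rw [h0] at hx
  rw [hL] at hy
  rw [hx, hy, abs_of_nonpos (by linarith [hu.1]), abs_of_nonpos (by linarith [hu.2])]
  ring

theorem exists_continuousOn_image_Icc (h : IsGeodesicSegment s x y) :
    ∃ γ : ℝ → X, ContinuousOn γ (Icc 0 (dist x y)) ∧ s = γ '' Icc 0 (dist x y) := by
  obtain ⟨γ, -, -, hiso, rfl⟩ := h
  refine ⟨γ, LipschitzOnWith.continuousOn (K := 1) ?_, rfl⟩
  exact LipschitzOnWith.of_dist_le_mul fun u hu v hv => by
    rw [hiso u hu v hv, NNReal.coe_one, one_mul, Real.dist_eq]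

theorem isCompact (h : IsGeodesicSegment s x y) : IsCompact s := by
  obtain ⟨γ, hγ, rfl⟩ := h.exists_continuousOn_image_Icc
  exact isCompact_Icc.image_of_continuousOn hγ

theorem isPreconnected (h : IsGeodesicSegment s x y) : IsPreconnected s := by
  obtain ⟨γ, hγ, rfl⟩ := h.exists_continuousOn_image_Icc
  exact isPreconnected_Icc.image γ hγ

end IsGeodesicSegment

end GeodesicSegment

section GromovProduct

variable {X : Type*} [MetricSpace X]

noncomputable def gromovProduct (w x y : X) : ℝ := (dist w x + dist w y - dist x y) / 2

theorem gromovProduct_comm (w x y : X) : gromovProduct w x y = gromovProduct w y x := by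
  unfold gromovProduct
  rw [dist_comm x y]
  ring

theorem gromovProduct_nonneg (w x y : X) : 0 ≤ gromovProduct w x y := by
  unfold gromovProduct
  linarith [dist_triangle_left x y w]

theorem gromovProduct_add_gromovProduct (x y w : X) :
    gromovProduct x w y + gromovProduct y w x = dist x y := by
  unfold gromovProduct
  rw [dist_comm y x, dist_comm w y, dist_comm w x]
  ring

theorem Isometry.gromovProduct_eq {Y : Type*} [MetricSpace Y] {f : X → Y} (hf : Isometry f)
    (w x y : X) : gromovProduct (f w) (f x) (f y) = gromovProduct w x y := by
  simp only [gromovProduct, hf.dist_eq]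

theorem IsGeodesicSegment.gromovProduct_le_dist {s : Set X} {x y : X}
    (h : IsGeodesicSegment s x y) {m : X} (hm : m ∈ s) (w : X) :
    gromovProduct w x y ≤ dist w m := by
  have hxy := h.dist_add_dist_of_mem hm
  unfold gromovProduct
  linarith [dist_triangle w m x, dist_triangle w m y, dist_comm m x]

end GromovProduct

def GromovProductHyperbolic (X : Type*) [MetricSpace X] (κ : ℝ) : Prop :=
  ∀ w x y z : X, min (gromovProduct w x z) (gromovProduct w z y) ≤ gromovProduct w x y + κ

namespace DeltaHyperbolic

variable {X : Type*} [MetricSpace X] {δ : ℝ}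

theorem exists_dist_le_of_triangle (hδ : DeltaHyperbolic X δ) {w x y : X} {S₁ S₂ S : Set X}
    (h₁ : IsGeodesicSegment S₁ w x) (h₂ : IsGeodesicSegment S₂ w y)
    (h : IsGeodesicSegment S y x) :
    ∃ u ∈ S₁, ∃ v ∈ S₂, ∃ v' ∈ S, dist u v ≤ δ ∧ dist u v' ≤ δ := by
  -- `infDist · S₂ - infDist · S` changes sign along `[w, x]`
  obtain ⟨u, hu, hequal⟩ := h₁.isPreconnected.intermediate_value₂ h₁.left_mem h₁.right_mem
    (continuous_infDist_pt S₂).continuousOn (continuous_infDist_pt S).continuousOn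
    (by rw [infDist_zero_of_mem h₂.left_mem]; exact infDist_nonneg)
    (by rw [infDist_zero_of_mem h.right_mem]; exact infDist_nonneg)
  have hclose : infDist u S ≤ δ := by
    obtain ⟨q, hq, hdq⟩ := hδ w y x S₂ S S₁ h₂ h h₁ u hu
    rcases hq with hq | hq
    · exact hequal ▸ (infDist_le_dist_of_mem hq).trans hdq
    · exact (infDist_le_dist_of_mem hq).trans hdq
  obtain ⟨v, hv, hdv⟩ := h₂.isCompact.exists_infDist_eq_dist ⟨w, h₂.left_mem⟩ u
  obtain ⟨v', hv', hdv'⟩ := h.isCompact.exists_infDist_eq_dist ⟨y, h.left_mem⟩ u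
  exact ⟨u, hu, v, hv, v', hv', hdv ▸ hequal ▸ hclose, hdv' ▸ hclose⟩

theorem exists_mem_dist_le_gromovProduct (hδ : DeltaHyperbolic X δ) (hgeo : GeodesicSpace X)
    (w : X) {x y : X} {S : Set X} (hS : IsGeodesicSegment S y x) :
    ∃ q ∈ S, dist w q ≤ gromovProduct w x y + 2 * δ := by
  obtain ⟨S₁, h₁⟩ := hgeo w x
  obtain ⟨S₂, h₂⟩ := hgeo w y
  obtain ⟨u, hu, v, hv, v', hv', huv, huv'⟩ := hδ.exists_dist_le_of_triangle h₁ h₂ hS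
  refine ⟨v', hv', ?_⟩
  have hwx := h₁.dist_add_dist_of_mem hu
  have hwy := h₂.dist_add_dist_of_mem hv
  have hxy : dist x y ≤ dist x u + dist u v + dist v y := dist_triangle4 x u v y
  have hvu : dist w v' ≤ dist w u + dist u v' := dist_triangle w u v'
  have hvv : dist w v' ≤ dist w v + dist v u + dist u v' := dist_triangle4 w v u v'
  unfold gromovProduct
  linarith [dist_comm x u, dist_comm v u]

theorem gromovProductHyperbolic (hδ : DeltaHyperbolic X δ) (hgeo : GeodesicSpace X) :
    GromovProductHyperbolic X (3 * δ) := by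
  intro w x y z
  obtain ⟨S, hS⟩ := hgeo y x
  obtain ⟨q, hq, hwq⟩ := hδ.exists_mem_dist_le_gromovProduct hgeo w hS
  obtain ⟨S₁, h₁⟩ := hgeo y z
  obtain ⟨S₂, h₂⟩ := hgeo z x
  obtain ⟨q', hq', hqq'⟩ := hδ y z x S₁ S₂ S h₁ h₂ hS q hq
  have hwq' : dist w q' ≤ gromovProduct w x y + 3 * δ := by
    linarith [dist_triangle w q q']
  rcases hq' with hq' | hq'
  · rw [gromovProduct_comm w z y]
    exact (min_le_right _ _).trans ((h₁.gromovProduct_le_dist hq' w).trans hwq')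
  · rw [gromovProduct_comm w x z]
    exact (min_le_left _ _).trans ((h₂.gromovProduct_le_dist hq' w).trans hwq')

end DeltaHyperbolic

namespace GromovProductHyperbolic

variable {X : Type*} [MetricSpace X] {κ : ℝ}

theorem nonneg (hX : GromovProductHyperbolic X κ) (w : X) : 0 ≤ κ := by
  simpa [gromovProduct] using hX w w w w

variable (hX : GromovProductHyperbolic X κ) {c D : ℝ} {x : ℕ → X}
  (hstep : ∀ n, dist (x n) (x (n + 1)) = D)
  (hturn : ∀ n, gromovProduct (x (n + 1)) (x n) (x (n + 2)) ≤ D / 2 - c)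
include hX hstep hturn

theorem gromovProduct_chain_le (hκc : κ < c) (n : ℕ) :
    gromovProduct (x (n + 1)) (x 0) (x (n + 2)) ≤ D / 2 - (c - κ) := by
  induction n with
  | zero => linarith [hturn 0, hX.nonneg (x 0)]
  | succ m ih =>
    -- seen from `x (m + 2)`, the point `x 0` lies behind `x (m + 1)`, so the four-point
    -- condition passes the small turn at `x (m + 2)` on to `x 0`
    have hback : D / 2 + (c - κ) ≤ gromovProduct (x (m + 2)) (x (m + 1)) (x 0) := by
      have := gromovProduct_add_gromovProduct (x (m + 2)) (x (m + 1)) (x 0)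
      rw [dist_comm, hstep, gromovProduct_comm (x (m + 2))] at this
      linarith
    have hfour := hX (x (m + 2)) (x (m + 1)) (x (m + 3)) (x 0)
    rcases min_le_iff.mp hfour with h | h <;> linarith [hturn (m + 1)]

theorem mul_le_dist_chain (hκc : κ < c) (n : ℕ) : 2 * (c - κ) * n ≤ dist (x 0) (x n) := by
  induction n with
  | zero => simp
  | succ m ih =>
    rcases m with _ | m
    · have hD : dist (x 0) (x 1) = D := hstep 0
      norm_num
      linarith [hturn 0, gromovProduct_nonneg (x 1) (x 0) (x 2), hX.nonneg (x 0)]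
    · have hchain := hX.gromovProduct_chain_le hstep hturn hκc m
      unfold gromovProduct at hchain
      rw [hstep, dist_comm] at hchain
      push_cast at ih ⊢
      linarith

end GromovProductHyperbolic

theorem IsHyperbolicIso.not_isOfFinOrder {X : Type*} [MetricSpace X] {a : X ≃ᵢ X}
    (ha : IsHyperbolicIso a) : ¬ IsOfFinOrder a := by
  obtain ⟨x, C, hC, hgrow⟩ := ha
  intro hfin
  obtain ⟨n, hn, hpow⟩ := isOfFinOrder_iff_pow_eq_one.mp hfin
  have := hgrow n hn
  rw [hpow, IsometryEquiv.coe_one, id, dist_self] at this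
  linarith [mul_pos hC (Nat.cast_pos.mpr hn : (0 : ℝ) < n)]

/-- In a `δ`-hyperbolic geodesic space with `δ > 0`, if an isometry `a`
satisfies `d(p, a p) ≤ d(a p, a⁻¹ p) − 100δ` at some point `p`, then `a` is a hyperbolic
isometry; in particular `a` has infinite order. -/
theorem local_criterion_hyperbolic
    {X : Type*} [MetricSpace X] {δ : ℝ} (hδpos : 0 < δ)
    (hgeo : GeodesicSpace X) (hδ : DeltaHyperbolic X δ)
    (a : X ≃ᵢ X) (p : X)
    (h : dist p (a p) ≤ dist (a p) (a⁻¹ p) - 100 * δ) :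
    IsHyperbolicIso a ∧ ¬ IsOfFinOrder a := by
  have hpow : ∀ m n : ℕ, (a ^ (m + n)) p = (a ^ m) ((a ^ n) p) := fun m n => by
    rw [pow_add, IsometryEquiv.mul_apply]
  have hstep : ∀ n : ℕ, dist ((a ^ n) p) ((a ^ (n + 1)) p) = dist p (a p) := fun n => by
    rw [hpow, pow_one, (a ^ n).dist_eq]
  have hturn : ∀ n : ℕ, gromovProduct ((a ^ (n + 1)) p) ((a ^ n) p) ((a ^ (n + 2)) p)
      ≤ dist p (a p) / 2 - 50 * δ := fun n => by
    rw [hpow, hpow n 2, pow_one, pow_two, IsometryEquiv.mul_apply,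
      (a ^ n).isometry.gromovProduct_eq]
    have hfar : dist (a p) (a⁻¹ p) = dist p (a (a p)) := by
      rw [← a.dist_eq, IsometryEquiv.apply_inv_self, dist_comm]
    unfold gromovProduct
    rw [a.dist_eq, dist_comm (a p) p]
    linarith
  have hgrow := (hδ.gromovProductHyperbolic hgeo).mul_le_dist_chain hstep hturn
    (by linarith)
  have hhyp : IsHyperbolicIso a := ⟨p, 2 * (50 * δ - 3 * δ), by linarith, fun n _ => hgrow n⟩
  exact ⟨hhyp, hhyp.not_isOfFinOrder⟩
end

section
/- Let a group G act acylindrically by isometries on a δ-hyperbolic graph Γ. Then there exists an integer P ≥ 1, depending only on δ and the acylindricity constant K(200δ), such that for every element a ∈ G acting hyperbolically with a geodesic quasi-axis, tr(a^P) ≥ 1; equivalently, tr(a) ≥ 1/P. -/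
open Filter Metric Set

/-- The group `G` acts on `X` by isometries. -/
def IsometricAction (G X : Type*) [Group G] [MetricSpace X] [MulAction G X] : Prop :=
  ∀ g : G, Isometry (fun x : X => g • x)

/-- Translation length of a group element acting on `X`. -/
def HasTransLength {G : Type*} [Group G] (X : Type*) [MetricSpace X] [MulAction G X]
    (a : G) (τ : ℝ) : Prop :=
  ∀ x : X, Filter.Tendsto (fun n : ℕ => dist x ((a ^ n) • x) / (n : ℝ))
    Filter.atTop (nhds τ)

/-- A (geodesic) quasi-axis of `a`: a geodesic line `α` with `a • α ⊆ N_C(α)` for some `C ≥ 0`. -/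
def IsQuasiAxis {G : Type*} [Group G] {X : Type*} [MetricSpace X] [MulAction G X]
    (a : G) (α : ℝ → X) : Prop :=
  IsGeodesicLine α ∧ ∃ C : ℝ, 0 ≤ C ∧ ∀ t : ℝ, ∃ s : ℝ, dist (a • α t) (α s) ≤ C

/-- Acylindricity at scale `R` with constants `K`, `L`. -/
def AcylAt (G X : Type*) [Group G] [MetricSpace X] [MulAction G X] (R K L : ℝ) : Prop :=
  1 ≤ K ∧ 1 ≤ L ∧ ∀ x y : X, L ≤ dist x y →
    {g : G | dist x (g • x) ≤ R ∧ dist y (g • y) ≤ R}.Finite ∧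
    ({g : G | dist x (g • x) ≤ R ∧ dist y (g • y) ≤ R}.ncard : ℝ) ≤ K

/-- An acylindrical action, with constant functions `K L : ℝ → ℝ`. -/
def Acylindrical (G X : Type*) [Group G] [MetricSpace X] [MulAction G X]
    (K L : ℝ → ℝ) : Prop :=
  ∀ R : ℝ, 0 < R → AcylAt G X R (K R) (L R)

/-- The homomorphism from the rank-2 free group sending the generators to `a` and `b`. -/
def pairMap {G : Type*} [Group G] (a b : G) : FreeGroup Bool →* G :=
  FreeGroup.lift (fun t => if t then a else b)

/-- `a`, `b` generate a free subgroup of rank two. -/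
def FreePair {G : Type*} [Group G] (a b : G) : Prop :=
  Function.Injective (pairMap a b)

/-- The orbit map of `⟨a, b⟩` into `X` is a quasi-isometric embedding
(word metric with respect to `{a, b}`). -/
def OrbitQIE (G X : Type*) [Group G] [MetricSpace X] [MulAction G X] (a b : G) : Prop :=
  ∃ (x : X) (Λ C : ℝ), 0 < Λ ∧ 0 ≤ C ∧ ∀ w : FreeGroup Bool,
    ((FreeGroup.toWord w).length : ℝ) / Λ - C ≤ dist x (pairMap a b w • x) ∧
    dist x (pairMap a b w • x) ≤ Λ * ((FreeGroup.toWord w).length : ℝ) + C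

/-- Two group elements are independent: no nonzero powers commute. -/
def Independent {G : Type*} [Group G] (a b : G) : Prop :=
  ∀ s t : ℤ, s ≠ 0 → t ≠ 0 → a ^ s * b ^ t ≠ b ^ t * a ^ s

/-!
Let `α` be a quasi-axis of `a`. Every translate `aⁿ • α` stays at bounded distance from `α`, so
thin triangles put it within `2δ` of `α`; reading off positions along `α`, the power `aⁿ` moves
`α` like a rough isometry of `ℝ`, hence, up to `10δ`, like an isometry `t ↦ σₙ t + cₙ`.
The slopes are multiplicative in `n`, and slope `-1` is impossible: for odd `n`, `a²ⁿ` would move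
`α 0` by at most `20δ`, although `dist x (a²ⁿ • x) ≥ 2nτ`. So `aⁿ` is a coarse translation of `α`
by `cₙ`, and comparing with `aⁿʲ` for large `j` gives `|cₙ| ≤ nτ + 10δ`, whence `aⁿ` moves every
point of `α` by at most `nτ + 20δ`. If `τ < 1/P` with `P = ⌈K R⌉₊` and `R = 20|δ| + 1`, the
`P + 1` distinct powers `a⁰, …, aᴾ` then move two points of `α` at distance `L R` by at most `R`,
contradicting acylindricity.
-/

def IsRoughIsometry {Y Z : Type*} [PseudoMetricSpace Y] [PseudoMetricSpace Z] (ε : ℝ)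
    (f : Y → Z) : Prop :=
  ∀ x y, |dist (f x) (f y) - dist x y| ≤ ε

lemma mul_pos_of_mul_pos_of_mul_pos {R : Type*} [CommRing R] [LinearOrder R]
    [IsStrictOrderedRing R] {x y z : R} (hxy : 0 < x * y) (hyz : 0 < y * z) : 0 < x * z :=
  pos_of_mul_pos_left (by nlinarith [mul_pos hxy hyz] : 0 < x * z * (y * y)) (mul_self_nonneg y)

namespace IsRoughIsometry

variable {S : ℝ → ℝ} {ε : ℝ}

/-- If the two increments had opposite signs, `|S w - S v|` would be at most the larger of them,
losing the length of the shorter interval, which exceeds `2ε`. -/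
lemma increments_mul_pos_of_adjacent (h : IsRoughIsometry ε S) {u v w : ℝ}
    (hvu : v + (2 * ε + 1) ≤ u) (huw : u + (2 * ε + 1) ≤ w) :
    0 < (S u - S v) * (S w - S u) := by
  simp only [IsRoughIsometry, Real.dist_eq] at h
  have hε : 0 ≤ ε := by simpa using h u u
  by_contra hneg
  have hA := h u v
  have hB := h w u
  have hC := h w v
  rw [abs_of_nonneg (by linarith : 0 ≤ u - v)] at hA
  rw [abs_of_nonneg (by linarith : 0 ≤ w - u)] at hB
  rw [abs_of_nonneg (by linarith : 0 ≤ w - v)] at hC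
  rw [abs_le] at hA hB hC
  rcases abs_cases (S u - S v) with ⟨ha, _⟩ | ⟨ha, _⟩ <;>
  rcases abs_cases (S w - S u) with ⟨hb, _⟩ | ⟨hb, _⟩ <;>
  rcases abs_cases (S w - S v) with ⟨hc, _⟩ | ⟨hc, _⟩ <;>
  nlinarith

lemma increments_mul_pos (h : IsRoughIsometry ε S) {u v u' v' : ℝ}
    (hvu : v + (2 * ε + 1) ≤ u) (hvu' : v' + (2 * ε + 1) ≤ u') :
    0 < (S u - S v) * (S u' - S v') := by
  set W := max u u' + (2 * ε + 1)
  have hu : u + (2 * ε + 1) ≤ W := by simp only [W]; linarith [le_max_left u u']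
  have hu' : u' + (2 * ε + 1) ≤ W := by simp only [W]; linarith [le_max_right u u']
  have h₁ : 0 < (S u - S v) * (S (W + (2 * ε + 1)) - S W) :=
    mul_pos_of_mul_pos_of_mul_pos (h.increments_mul_pos_of_adjacent hvu hu)
      (h.increments_mul_pos_of_adjacent hu le_rfl)
  have h₂ : 0 < (S (W + (2 * ε + 1)) - S W) * (S u' - S v') := by
    rw [mul_comm]
    exact mul_pos_of_mul_pos_of_mul_pos (h.increments_mul_pos_of_adjacent hvu' hu')
      (h.increments_mul_pos_of_adjacent hu' le_rfl)
  exact mul_pos_of_mul_pos_of_mul_pos h₁ h₂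

theorem exists_sign_abs_sub_affine_le (h : IsRoughIsometry ε S) :
    ∃ σ : ℝ, (σ = 1 ∨ σ = -1) ∧ ∀ u, |S u - (σ * u + S 0)| ≤ 2 * ε := by
  set g := 2 * ε + 1
  set σ : ℝ := if 0 < S g - S 0 then 1 else -1
  have hσ : σ = 1 ∨ σ = -1 := by by_cases h0 : 0 < S g - S 0 <;> simp [σ, h0]
  have hσ_abs : |σ| = 1 := by rcases hσ with hσ | hσ <;> simp [hσ]
  have hσσ : σ * σ = 1 := by rw [← abs_mul_abs_self, hσ_abs, one_mul]
  have hgap : ∀ u v, v + g ≤ u → |S u - S v - σ * (u - v)| ≤ ε := by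
    intro u v huv
    have hpos := h.increments_mul_pos huv (by linarith : (0 : ℝ) + g ≤ g)
    have habs : |S u - S v| = σ * (S u - S v) := by
      by_cases h0 : 0 < S g - S 0
      · simp only [σ, h0, if_true, one_mul]
        exact abs_of_pos (pos_of_mul_pos_left hpos h0.le)
      · simp only [σ, h0, if_false, neg_one_mul]
        exact abs_of_neg (neg_of_mul_pos_left hpos (not_lt.mp h0))
    have hε : 0 ≤ ε := by simpa using h u u
    have e : S u - S v - σ * (u - v) = σ * (|S u - S v| - |u - v|) := by
      rw [habs, abs_of_nonneg (by linarith : 0 ≤ u - v)]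
      linear_combination (-(S u - S v)) * hσσ
    rw [e, abs_mul, hσ_abs, one_mul, ← Real.dist_eq, ← Real.dist_eq]
    exact h u v
  refine ⟨σ, hσ, fun u => ?_⟩
  set w := max u 0 + g
  have hu := hgap w u (by simp only [w]; linarith [le_max_left u 0])
  have h0 := hgap w 0 (by simp only [w]; linarith [le_max_right u 0])
  calc |S u - (σ * u + S 0)| = |(S w - S 0 - σ * (w - 0)) - (S w - S u - σ * (w - u))| := by
        congr 1; ring
    _ ≤ |S w - S 0 - σ * (w - 0)| + |S w - S u - σ * (w - u)| := abs_sub _ _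
    _ ≤ 2 * ε := by linarith

end IsRoughIsometry

lemma sign_eq_of_abs_affine_sub_le {σ σ' c c' D : ℝ} (hσ : σ = 1 ∨ σ = -1)
    (hσ' : σ' = 1 ∨ σ' = -1) (h : ∀ t, |σ * t + c - (σ' * t + c')| ≤ D) : σ = σ' := by
  have h₁ := abs_le.mp (h (|D| + 1))
  have h₂ := abs_le.mp (h (-(|D| + 1)))
  have := le_abs_self D
  rcases hσ with rfl | rfl <;> rcases hσ' with rfl | rfl <;> first | rfl | (exfalso; linarith)

section Geodesics

variable {X : Type*} [MetricSpace X]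

lemma IsGeodesicSegment.dist_le {s : Set X} {x y p : X} (hs : IsGeodesicSegment s x y)
    (hp : p ∈ s) : dist p x ≤ dist x y ∧ dist p y ≤ dist x y := by
  obtain ⟨γ, rfl, hγy, hγ, rfl⟩ := hs
  obtain ⟨u, hu, rfl⟩ := hp
  have h0 : (0:ℝ) ∈ Icc 0 (dist (γ 0) y) := ⟨le_rfl, dist_nonneg⟩
  have hD : dist (γ 0) y ∈ Icc 0 (dist (γ 0) y) := ⟨dist_nonneg, le_rfl⟩
  constructor
  · rw [hγ u hu 0 h0, abs_of_nonneg (by linarith [hu.1])]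
    linarith [hu.2]
  · rw [← hγy, hγ u hu _ hD, hγy, abs_of_nonpos (by linarith [hu.2])]
    linarith [hu.1]

lemma isGeodesicSegment_singleton (x : X) : IsGeodesicSegment {x} x x :=
  ⟨fun _ => x, rfl, rfl, fun u _ v _ => by simp_all, by simp⟩

lemma DeltaHyperbolic.nonneg {δ : ℝ} (hδ : DeltaHyperbolic X δ) (x : X) : 0 ≤ δ := by
  have hx := isGeodesicSegment_singleton x
  obtain ⟨q, -, hxq⟩ := hδ x x x _ _ _ hx hx hx x rfl
  exact dist_nonneg.trans hxq

namespace IsGeodesicLine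

variable {α : ℝ → X}

lemma comp_neg (hα : IsGeodesicLine α) : IsGeodesicLine (fun t => α (-t)) := fun s t => by
  rw [hα, ← abs_neg]; ring_nf

lemma isGeodesicSegment_image_Icc (hα : IsGeodesicLine α) {p q : ℝ} (hpq : p ≤ q) :
    IsGeodesicSegment (α '' Icc p q) (α p) (α q) := by
  have hd : dist (α p) (α q) = q - p := by rw [hα, abs_sub_comm, abs_of_nonneg (by linarith)]
  refine ⟨fun u => α (p + u), by simp, by simp [hd], fun u _ v _ => ?_, ?_⟩
  · rw [hα]; ring_nf
  · rw [hd, ← image_image (g := α) (fun u => p + u), image_const_add_Icc, add_zero,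
      add_sub_cancel]

lemma exists_isGeodesicSegment_subset_range (hα : IsGeodesicLine α) (p q : ℝ) :
    ∃ s ⊆ range α, IsGeodesicSegment s (α p) (α q) := by
  rcases le_total p q with hpq | hqp
  · exact ⟨_, image_subset_range _ _, hα.isGeodesicSegment_image_Icc hpq⟩
  · have h := hα.comp_neg.isGeodesicSegment_image_Icc (neg_le_neg hqp)
    simp only [neg_neg] at h
    exact ⟨_, by rintro _ ⟨t, -, rfl⟩; exact mem_range_self _, h⟩

end IsGeodesicLine

theorem DeltaHyperbolic.exists_dist_le_two_mul_of_exists_dist_le {δ : ℝ}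
    (hgeo : GeodesicSpace X) (hδ : DeltaHyperbolic X δ) {α β : ℝ → X}
    (hα : IsGeodesicLine α) (hβ : IsGeodesicLine β) {C : ℝ}
    (hC : ∀ t, ∃ s, dist (β t) (α s) ≤ C) (t : ℝ) : ∃ s, dist (β t) (α s) ≤ 2 * δ := by
  obtain ⟨s₀, hs₀⟩ := hC 0
  have hC₀ : 0 ≤ C := dist_nonneg.trans hs₀
  have hδ₀ := hδ.nonneg (α 0)
  -- `T > 2δ + C`, so `β t` can be near neither side of the triangles below ending at `β (t ± T)`.
  set T := C + 2 * δ + 1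
  obtain ⟨sm, hsm⟩ := hC (t - T)
  obtain ⟨sp, hsp⟩ := hC (t + T)
  have hdm : dist (β t) (β (t - T)) = T := by
    rw [hβ, sub_sub_cancel, abs_of_nonneg (by positivity)]
  have hdp : dist (β t) (β (t + T)) = T := by
    rw [hβ, sub_add_cancel_left, abs_neg, abs_of_nonneg (by positivity)]
  obtain ⟨s₁, hs₁⟩ := hgeo (β (t - T)) (α sm)
  obtain ⟨s₂, hs₂⟩ := hgeo (α sm) (β (t + T))
  obtain ⟨s₃, hs₃α, hs₃⟩ := hα.exists_isGeodesicSegment_subset_range sm sp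
  obtain ⟨s₄, hs₄⟩ := hgeo (α sp) (β (t + T))
  obtain ⟨q, hq, hβq⟩ := hδ _ _ _ _ _ _ hs₁ hs₂
    (hβ.isGeodesicSegment_image_Icc (by linarith : t - T ≤ t + T)) (β t)
    ⟨t, ⟨by linarith, by linarith⟩, rfl⟩
  have hq₂ : q ∈ s₂ := hq.resolve_left fun hq₁ => by
    linarith [(hs₁.dist_le hq₁).1, dist_triangle (β t) q (β (t - T))]
  obtain ⟨r, hr, hqr⟩ := hδ _ _ _ _ _ _ hs₃ hs₄ hs₂ q hq₂
  have hr₃ : r ∈ s₃ := hr.resolve_right fun hr₄ => by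
    rw [dist_comm] at hsp
    linarith [(hs₄.dist_le hr₄).2, dist_triangle4 (β t) q r (β (t + T))]
  obtain ⟨s, rfl⟩ := hs₃α hr₃
  exact ⟨s, by linarith [dist_triangle (β t) q (α s)]⟩

end Geodesics

section Action

variable {G X : Type*} [Group G] [MetricSpace X] [MulAction G X]

lemma IsometricAction.dist_pow_smul_le (hiso : IsometricAction G X) (g : G) (x : X) (n : ℕ) :
    dist x ((g ^ n) • x) ≤ n * dist x (g • x) := by
  induction n with
  | zero => simp
  | succ n ih =>
    calc dist x ((g ^ (n + 1)) • x)
        ≤ dist x ((g ^ n) • x) + dist ((g ^ n) • x) ((g ^ n) • g • x) := by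
          rw [pow_succ, mul_smul]; exact dist_triangle _ _ _
      _ ≤ (n + 1 : ℕ) * dist x (g • x) := by
          rw [(hiso _).dist_eq]; push_cast; linarith

namespace HasTransLength

variable {a : G} {τ : ℝ}

lemma tendsto_pow_mul (hτ : HasTransLength X a τ) (x : X) (m : ℕ) :
    Tendsto (fun j : ℕ => dist x ((a ^ (m * j)) • x) / j) atTop (nhds (m * τ)) := by
  rcases eq_or_ne m 0 with rfl | hm
  · simp
  refine ((hτ x).comp (tendsto_id.const_mul_atTop' (Nat.pos_of_ne_zero hm))).const_mul (m : ℝ)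
    |>.congr fun j => ?_
  simp only [Function.comp, id, Nat.cast_mul]
  rcases eq_or_ne (j : ℝ) 0 with hj | hj
  · simp [hj]
  · field_simp

lemma mul_le_dist (hiso : IsometricAction G X) (hτ : HasTransLength X a τ) (x : X) (m : ℕ) :
    m * τ ≤ dist x ((a ^ m) • x) := by
  refine le_of_tendsto (hτ.tendsto_pow_mul x m) (Eventually.of_forall fun j => ?_)
  refine div_le_of_le_mul₀ (Nat.cast_nonneg j) dist_nonneg ?_
  rw [pow_mul, mul_comm]
  exact hiso.dist_pow_smul_le _ x j

lemma not_isOfFinOrder (hiso : IsometricAction G X) (hτ : HasTransLength X a τ) (hτpos : 0 < τ)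
    (x : X) : ¬IsOfFinOrder a := by
  rw [isOfFinOrder_iff_pow_eq_one]
  rintro ⟨n, hn, han⟩
  have := hτ.mul_le_dist hiso x n
  rw [han, one_smul, dist_self] at this
  have : (0 : ℝ) < n * τ := mul_pos (Nat.cast_pos.mpr hn) hτpos
  linarith

end HasTransLength

lemma IsQuasiAxis.exists_pow {a : G} {α : ℝ → X} (hiso : IsometricAction G X)
    (h : IsQuasiAxis a α) (n : ℕ) : ∃ C, ∀ t, ∃ s, dist ((a ^ n) • α t) (α s) ≤ C := by
  obtain ⟨-, C₁, -, hC₁⟩ := h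
  induction n with
  | zero => exact ⟨0, fun t => ⟨t, by simp⟩⟩
  | succ n ih =>
    obtain ⟨C, hC⟩ := ih
    refine ⟨C + C₁, fun t => ?_⟩
    obtain ⟨s, hs⟩ := hC t
    obtain ⟨s', hs'⟩ := hC₁ s
    refine ⟨s', ?_⟩
    calc dist ((a ^ (n + 1)) • α t) (α s')
        ≤ dist (a • (a ^ n) • α t) (a • α s) + dist (a • α s) (α s') := by
          rw [pow_succ', mul_smul]; exact dist_triangle _ _ _
      _ ≤ C + C₁ := by rw [(hiso a).dist_eq]; exact add_le_add hs hs'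

def CoarselyActsAs (g : G) (α : ℝ → X) (φ : ℝ → ℝ) (E : ℝ) : Prop :=
  ∀ t, dist (g • α t) (α (φ t)) ≤ E

namespace CoarselyActsAs

variable {g h : G} {α : ℝ → X} {φ ψ : ℝ → ℝ} {E F : ℝ}

lemma mul (hiso : IsometricAction G X) (hg : CoarselyActsAs g α φ E)
    (hh : CoarselyActsAs h α ψ F) : CoarselyActsAs (g * h) α (φ ∘ ψ) (F + E) := fun t =>
  calc dist ((g * h) • α t) (α (φ (ψ t)))
      ≤ dist (g • h • α t) (g • α (ψ t)) + dist (g • α (ψ t)) (α (φ (ψ t))) := by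
        rw [mul_smul]; exact dist_triangle _ _ _
    _ ≤ F + E := by rw [(hiso g).dist_eq]; exact add_le_add (hh t) (hg _)

lemma abs_sub_le (hα : IsGeodesicLine α) (hφ : CoarselyActsAs g α φ E)
    (hψ : CoarselyActsAs g α ψ F) (t : ℝ) : |φ t - ψ t| ≤ E + F := by
  rw [← hα]
  linarith [dist_triangle_left (α (φ t)) (α (ψ t)) (g • α t), hφ t, hψ t]

lemma dist_smul_le (hα : IsGeodesicLine α) (hφ : CoarselyActsAs g α φ E) (t : ℝ) :
    dist (α t) (g • α t) ≤ |φ t - t| + E := by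
  rw [← hα]
  linarith [dist_triangle_right (α t) (g • α t) (α (φ t)), hφ t, dist_comm (α t) (α (φ t))]

lemma le_dist_smul (hα : IsGeodesicLine α) (hφ : CoarselyActsAs g α φ E) (t : ℝ) :
    |φ t - t| - E ≤ dist (α t) (g • α t) := by
  rw [← hα]
  linarith [dist_triangle (α (φ t)) (g • α t) (α t), hφ t, dist_comm (g • α t) (α (φ t)),
    dist_comm (α t) (g • α t)]

lemma pow_of_translation (hiso : IsometricAction G X) {c : ℝ}
    (hg : CoarselyActsAs g α (fun t => t + c) E) (n : ℕ) :
    CoarselyActsAs (g ^ n) α (fun t => t + n * c) (n * E) := by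
  induction n with
  | zero => intro t; simp
  | succ n ih =>
    intro t
    have := (ih.mul hiso hg) t
    rw [← pow_succ] at this
    push_cast
    convert this using 3
    · simp only [Function.comp_apply]; ring
    · ring

lemma slope_mul_eq (hiso : IsometricAction G X) (hα : IsGeodesicLine α)
    {σ₁ σ₂ σ₃ c₁ c₂ c₃ E₁ E₂ E₃ : ℝ} (h₁ : CoarselyActsAs g α (fun t => σ₁ * t + c₁) E₁)
    (h₂ : CoarselyActsAs h α (fun t => σ₂ * t + c₂) E₂)
    (h₃ : CoarselyActsAs (g * h) α (fun t => σ₃ * t + c₃) E₃)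
    (hσ₁ : σ₁ = 1 ∨ σ₁ = -1) (hσ₂ : σ₂ = 1 ∨ σ₂ = -1) (hσ₃ : σ₃ = 1 ∨ σ₃ = -1) :
    σ₃ = σ₁ * σ₂ := by
  have hσ₁₂ : σ₁ * σ₂ = 1 ∨ σ₁ * σ₂ = -1 := by
    rcases hσ₁ with rfl | rfl <;> rcases hσ₂ with rfl | rfl <;> norm_num
  refine sign_eq_of_abs_affine_sub_le hσ₃ hσ₁₂ (c := c₃) (c' := σ₁ * c₂ + c₁)
    (D := E₃ + (E₂ + E₁)) fun t => ?_
  have := h₃.abs_sub_le hα (h₁.mul hiso h₂) t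
  simp only [Function.comp] at this
  convert this using 2; ring

lemma dist_mul_self_smul_le (hiso : IsometricAction G X) (hα : IsGeodesicLine α) {c : ℝ}
    (hg : CoarselyActsAs g α (fun t => -t + c) E) (t : ℝ) :
    dist (α t) ((g * g) • α t) ≤ 2 * E := by
  have := (hg.mul hiso hg).dist_smul_le hα t
  simp only [Function.comp, neg_add, neg_neg, neg_add_cancel_right, sub_self, abs_zero] at this
  linarith

lemma abs_le_of_hasTransLength (hiso : IsometricAction G X) (hα : IsGeodesicLine α) {a : G}
    {τ c : ℝ} {m : ℕ} (hτ : HasTransLength X a τ)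
    (h : CoarselyActsAs (a ^ m) α (fun t => t + c) E) : |c| ≤ m * τ + E := by
  have hlim : |c| - E ≤ m * τ := by
    refine ge_of_tendsto (hτ.tendsto_pow_mul (α 0) m) (eventually_atTop.mpr ⟨1, fun j hj => ?_⟩)
    have hj' : (0 : ℝ) < j := Nat.cast_pos.mpr hj
    have := (h.pow_of_translation hiso j).le_dist_smul hα 0
    rw [← pow_mul, zero_add, sub_zero, abs_mul, Nat.abs_cast] at this
    rw [le_div_iff₀ hj']
    linarith
  linarith

end CoarselyActsAs

theorem exists_coarselyActsAs_affine {δ : ℝ} (hiso : IsometricAction G X)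
    (hgeo : GeodesicSpace X) (hδ : DeltaHyperbolic X δ) {g : G} {α : ℝ → X}
    (hα : IsGeodesicLine α) {C : ℝ} (hC : ∀ t, ∃ s, dist (g • α t) (α s) ≤ C) :
    ∃ σ c : ℝ, (σ = 1 ∨ σ = -1) ∧ CoarselyActsAs g α (fun t => σ * t + c) (10 * δ) := by
  have hgα : IsGeodesicLine (fun t => g • α t) := fun s t => by
    rw [(hiso g).dist_eq, hα]
  choose T hT using hδ.exists_dist_le_two_mul_of_exists_dist_le hgeo hα hgα hC
  have hT_rough : IsRoughIsometry (4 * δ) T := fun u v => by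
    rw [Real.dist_eq, Real.dist_eq, ← hα (T u), ← hα u v, ← (hiso g).dist_eq (α u)]
    rw [abs_le]
    constructor
    · linarith [dist_triangle4 (g • α u) (α (T u)) (α (T v)) (g • α v), hT u, hT v,
        dist_comm (g • α v) (α (T v))]
    · linarith [dist_triangle4 (α (T u)) (g • α u) (g • α v) (α (T v)), hT u, hT v,
        dist_comm (g • α u) (α (T u))]
  obtain ⟨σ, hσ, hTσ⟩ := hT_rough.exists_sign_abs_sub_affine_le
  refine ⟨σ, T 0, hσ, fun t => ?_⟩
  calc dist (g • α t) (α (σ * t + T 0))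
      ≤ dist (g • α t) (α (T t)) + dist (α (T t)) (α (σ * t + T 0)) := dist_triangle _ _ _
    _ ≤ 2 * δ + 2 * (4 * δ) := add_le_add (hT t) (by rw [hα]; exact hTσ t)
    _ = 10 * δ := by ring

end Action

section QuasiAxis

variable {G X : Type*} [Group G] [MetricSpace X] [MulAction G X] {δ τ : ℝ} {a : G}
  {α : ℝ → X}

theorem IsQuasiAxis.exists_coarselyActsAs_translation (hiso : IsometricAction G X)
    (hgeo : GeodesicSpace X) (hδ : DeltaHyperbolic X δ) (hτ : HasTransLength X a τ)
    (hτpos : 0 < τ) (hα : IsQuasiAxis a α) (n : ℕ) :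
    ∃ c, CoarselyActsAs (a ^ n) α (fun t => t + c) (10 * δ) := by
  have hline := hα.1
  have hpow : ∀ n : ℕ, ∃ σ c : ℝ, (σ = 1 ∨ σ = -1) ∧
      CoarselyActsAs (a ^ n) α (fun t => σ * t + c) (10 * δ) := fun n =>
    let ⟨_, hC⟩ := hα.exists_pow hiso n
    exists_coarselyActsAs_affine hiso hgeo hδ hline hC
  choose σ c hσ hσc using hpow
  have hσ_add : ∀ j k, σ (j + k) = σ j * σ k := fun j k =>
    (hσc j).slope_mul_eq hiso hline (hσc k) (pow_add a j k ▸ hσc (j + k)) (hσ j) (hσ k) (hσ _)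
  have hσ_pow : ∀ n, σ n = σ 1 ^ n := by
    intro n
    induction n with
    | zero =>
      rw [pow_zero]
      refine (hσ 0).resolve_right fun h0 => ?_
      have h := hσ_add 0 0
      rw [h0] at h
      norm_num at h
    | succ n ih => rw [hσ_add, ih, pow_succ]
  have hσ_one : σ 1 = 1 := by
    refine (hσ 1).resolve_right fun h => ?_
    obtain ⟨N, hN⟩ := exists_nat_gt (10 * δ / τ)
    have hodd : σ (2 * N + 1) = -1 := by rw [hσ_pow, h, (odd_two_mul_add_one N).neg_one_pow]
    have hrefl : CoarselyActsAs (a ^ (2 * N + 1)) α (fun t => -t + c (2 * N + 1)) (10 * δ) := by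
      convert hσc (2 * N + 1) using 3 with t
      rw [hodd, neg_one_mul]
    have hle := hrefl.dist_mul_self_smul_le hiso hline 0
    have hge := hτ.mul_le_dist hiso (α 0) (2 * N + 1 + (2 * N + 1))
    rw [pow_add] at hge
    rw [div_lt_iff₀ hτpos] at hN
    push_cast at hge
    nlinarith
  refine ⟨c n, ?_⟩
  have h := hσc n
  rw [hσ_pow n, hσ_one, one_pow] at h
  simpa only [one_mul] using h

theorem IsQuasiAxis.dist_pow_smul_le (hiso : IsometricAction G X) (hgeo : GeodesicSpace X)
    (hδ : DeltaHyperbolic X δ) (hτ : HasTransLength X a τ) (hτpos : 0 < τ)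
    (hα : IsQuasiAxis a α) (n : ℕ) (t : ℝ) :
    dist (α t) ((a ^ n) • α t) ≤ n * τ + 20 * δ := by
  obtain ⟨c, hc⟩ := hα.exists_coarselyActsAs_translation hiso hgeo hδ hτ hτpos n
  have hc_le := hc.abs_le_of_hasTransLength hiso hα.1 hτ
  calc dist (α t) ((a ^ n) • α t) ≤ |t + c - t| + 10 * δ := hc.dist_smul_le hα.1 t
    _ ≤ n * τ + 20 * δ := by rw [add_sub_cancel_left]; linarith

end QuasiAxis

lemma succ_le_ncard_of_pow_mem {M : Type*} [LeftCancelMonoid M] {a : M} (ha : ¬IsOfFinOrder a)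
    {S : Set M} (hS : S.Finite) {P : ℕ} (h : ∀ i ≤ P, a ^ i ∈ S) : P + 1 ≤ S.ncard := by
  have hinj : InjOn (a ^ ·) (Iic P) := (injective_pow_iff_not_isOfFinOrder.mpr ha).injOn
  calc P + 1 = ((a ^ ·) '' Iic P).ncard := by
        rw [hinj.ncard_image, Set.ncard_Iic_nat]
    _ ≤ S.ncard := ncard_le_ncard (image_subset_iff.mpr h) hS

/-- Lemma 3: If `G` acts acylindrically on a `δ`-hyperbolic graph, there is
an integer `P ≥ 1` such that every element of `G` acting hyperbolically with a geodesic
quasi-axis satisfies `tr(a) ≥ 1/P` (equivalently `tr(a^P) ≥ 1`). -/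
theorem uniform_translation_length_lower_bound
    {G : Type*} [Group G] {X : Type*} [MetricSpace X] [MulAction G X] {δ : ℝ}
    (K L : ℝ → ℝ) (hiso : IsometricAction G X) (hgeo : GeodesicSpace X)
    (hδ : DeltaHyperbolic X δ) (hacyl : Acylindrical G X K L) :
    ∃ P : ℕ, 1 ≤ P ∧ ∀ (a : G) (τ : ℝ), HasTransLength X a τ → 0 < τ →
      (∃ α : ℝ → X, IsQuasiAxis a α) → 1 / (P : ℝ) ≤ τ := by
  set R : ℝ := 20 * |δ| + 1
  obtain ⟨hK, -, hacylR⟩ := hacyl R (by positivity)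
  set P := ⌈K R⌉₊
  refine ⟨P, Nat.one_le_ceil_iff.mpr (by linarith), ?_⟩
  rintro a τ hτ hτpos ⟨α, hα⟩
  by_contra! hlt
  have hPτ : P * τ < 1 := by
    rwa [lt_div_iff₀ (by positivity), mul_comm] at hlt
  have hmove : ∀ i ≤ P, ∀ t, dist (α t) ((a ^ i) • α t) ≤ R := fun i hi t => by
    have hiP : (i : ℝ) * τ ≤ P * τ := by gcongr
    linarith [hα.dist_pow_smul_le hiso hgeo hδ hτ hτpos i t, le_abs_self δ]
  obtain ⟨hfin, hcard⟩ := hacylR (α 0) (α (L R)) <| by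
    rw [hα.1, zero_sub, abs_neg]; exact le_abs_self _
  have hcount := succ_le_ncard_of_pow_mem (hτ.not_isOfFinOrder hiso hτpos (α 0)) hfin
    fun i hi => ⟨hmove i hi 0, hmove i hi (L R)⟩
  have : (P : ℝ) + 1 ≤ K R := by exact_mod_cast (Nat.cast_le.mpr hcount).trans hcard
  linarith [Nat.le_ceil (K R)]
end
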